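/- For the free Z-module M on dotted non-crossing matchings of 2n points (each arc carrying 0 or 1 dot), modulo the submodule N generated by all Type II relations (two all-structure-preserving nesting moves with dots fixed), all basis elements in which every arc carries a dot become equal: for any two non-crossing matchings a, b ∈ B^n, the all-dotted element of a equals the all-dotted element of b in M/N. -/

import Mathlib

/-! Every all-dotted matching is joined by Type II moves to the rainbow matching `m ↦ 2n + 1 - m`.
If `f` agrees with the rainbow below `s` but `f s ≠ l := 2n + 1 - s`, then the points outside
`[s, l]` are matched among themselves, so `[s, l]` is closed under `f`, `f s = j` and `f l = k`
with `s < j < k < l`, and the move replacing `{s, j}, {k, l}` by `{s, l}, {j, k}` keeps the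
matching non-crossing and makes it agree with the rainbow up to `s`. -/

def IsMatching (n : ℕ) (f : ℕ → ℕ) : Prop :=
  (∀ m, 1 ≤ m → m ≤ 2 * n → (1 ≤ f m ∧ f m ≤ 2 * n ∧ f (f m) = m ∧ f m ≠ m)) ∧
  (∀ m, (m < 1 ∨ 2 * n < m) → f m = m)

def NonCrossing (f : ℕ → ℕ) : Prop :=
  ¬ ∃ i j k l : ℕ, i < j ∧ j < k ∧ k < l ∧ f i = k ∧ f j = l

def MoveAt (a b : ℕ → ℕ) (i j k l : ℕ) : Prop :=
  i < j ∧ j < k ∧ k < l ∧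
  a i = j ∧ a j = i ∧ a k = l ∧ a l = k ∧
  b i = l ∧ b l = i ∧ b j = k ∧ b k = j ∧
  ∀ m, m ∉ ({i, j, k, l} : Set ℕ) → b m = a m

/-- A dotted non-crossing matching: a non-crossing perfect matching together with
a dot assignment constant on arcs and `false` outside `{1,...,2n}`. -/
def DIdx (n : ℕ) : Type :=
  {q : (ℕ → ℕ) × (ℕ → Bool) //
    IsMatching n q.1 ∧ NonCrossing q.1 ∧ (∀ m, q.2 (q.1 m) = q.2 m) ∧
    ∀ m, (m < 1 ∨ 2 * n < m) → q.2 m = false}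

/-- The free `ℤ`-module on dotted non-crossing matchings. -/
abbrev DM (n : ℕ) := DIdx n →₀ ℤ

/-- Type II generators: `(a,D) - (b,D')` where `b` is obtained from `a` by one
nesting move whose four nodes are all dotted, all other dots matching. -/
def TypeIIGen (n : ℕ) : Set (DM n) :=
  {x | ∃ p q : DIdx n, ∃ i j k l : ℕ,
        MoveAt p.1.1 q.1.1 i j k l ∧ p.1.2 = q.1.2 ∧
        p.1.2 i = true ∧ p.1.2 j = true ∧ p.1.2 k = true ∧ p.1.2 l = true ∧
        x = Finsupp.single p 1 - Finsupp.single q 1}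

noncomputable def NSub (n : ℕ) : Submodule ℤ (DM n) := Submodule.span ℤ (TypeIIGen n)

/-- The all-dotted dot assignment. -/
def allDots (n : ℕ) : ℕ → Bool := fun m => decide (1 ≤ m ∧ m ≤ 2 * n)

namespace IsMatching

variable {n : ℕ} {f : ℕ → ℕ}

theorem apply_ne_iff (hf : IsMatching n f) {x : ℕ} : f x ≠ x ↔ 1 ≤ x ∧ x ≤ 2 * n :=
  ⟨fun hx => by by_contra h; exact hx (hf.2 x (by omega)), fun hx => (hf.1 x hx.1 hx.2).2.2.2⟩

theorem involutive (hf : IsMatching n f) : Function.Involutive f := fun x => by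
  by_cases hx : f x = x
  · rw [hx, hx]
  · obtain ⟨h1, h2⟩ := hf.apply_ne_iff.mp hx
    exact (hf.1 x h1 h2).2.2.1

theorem of_involutive (hf : Function.Involutive f)
    (hfix : ∀ x, f x ≠ x ↔ 1 ≤ x ∧ x ≤ 2 * n) : IsMatching n f := by
  refine ⟨fun m h1 h2 => ?_, fun m hm => not_not.mp fun h => by have := (hfix m).mp h; omega⟩
  have hm : f m ≠ m := (hfix m).mpr ⟨h1, h2⟩
  have hfm : f (f m) ≠ f m := by rw [hf m]; exact hm.symm
  exact ⟨((hfix (f m)).mp hfm).1, ((hfix (f m)).mp hfm).2, hf m, hm⟩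

theorem conj_swap (hf : IsMatching n f) {j l : ℕ} (hj : f j ≠ j) (hl : f l ≠ l) :
    IsMatching n (Equiv.swap j l ∘ f ∘ Equiv.swap j l) := by
  have hj' := hf.apply_ne_iff.mp hj
  have hl' := hf.apply_ne_iff.mp hl
  refine of_involutive (fun x => ?_) (fun x => ?_)
  · simp only [Function.comp_apply, Equiv.swap_apply_self, hf.involutive _]
  · rw [Function.comp_apply, Function.comp_apply, Ne, Equiv.swap_apply_eq_iff, ← Ne,
      hf.apply_ne_iff, Equiv.swap_apply_def]
    split_ifs <;> omega

theorem allDots_apply (hf : IsMatching n f) (m : ℕ) :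
    allDots n (f m) = allDots n m := by
  by_cases hm : f m = m
  · rw [hm]
  · have hm' := hf.apply_ne_iff.mp hm
    have hfm := hf.apply_ne_iff.mp fun h => hm (by rwa [hf.involutive m, eq_comm] at h)
    simp only [allDots, hm', hfm]

end IsMatching

/- The move replacing the arcs `{i, j}, {k, l}` of `f` by `{i, l}, {j, k}` is conjugation of `f`
by the transposition `(j l)`. -/

section Reconnect

variable {f : ℕ → ℕ} {i j k l : ℕ}

theorem conj_swap_apply_of_not_mem (hf : Function.Involutive f) (hi : f i = j) (hk : f k = l)
    {x : ℕ} (hx : x ∉ ({i, j, k, l} : Set ℕ)) :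
    (Equiv.swap j l ∘ f ∘ Equiv.swap j l) x = f x := by
  simp only [Set.mem_insert_iff, Set.mem_singleton_iff, not_or] at hx
  have hfx : f x ≠ j ∧ f x ≠ l := by
    constructor <;> rintro h
    · exact hx.1 (by rw [← hf x, h, ← hi, hf])
    · exact hx.2.2.1 (by rw [← hf x, h, ← hk, hf])
  simp only [Function.comp_apply, Equiv.swap_apply_of_ne_of_ne hx.2.1 hx.2.2.2,
    Equiv.swap_apply_of_ne_of_ne hfx.1 hfx.2]

theorem moveAt_conj_swap (hf : Function.Involutive f) (hij : i < j) (hjk : j < k) (hkl : k < l)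
    (hi : f i = j) (hk : f k = l) :
    MoveAt f (Equiv.swap j l ∘ f ∘ Equiv.swap j l) i j k l := by
  have hj : f j = i := hi ▸ hf i
  have hl : f l = k := hk ▸ hf k
  have swap_i : Equiv.swap j l i = i := Equiv.swap_apply_of_ne_of_ne (by omega) (by omega)
  have swap_k : Equiv.swap j l k = k := Equiv.swap_apply_of_ne_of_ne (by omega) (by omega)
  refine ⟨hij, hjk, hkl, hi, hj, hk, hl, ?_, ?_, ?_, ?_,
    fun m hm => conj_swap_apply_of_not_mem hf hi hk hm⟩ <;>
  simp only [Function.comp_apply, Equiv.swap_apply_left, Equiv.swap_apply_right, swap_i, swap_k,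
    hi, hj, hk, hl]

theorem eq_or_eq_of_conj_swap_apply_eq (hf : Function.Involutive f) (hij : i < j) (hjk : j < k)
    (hkl : k < l) (hi : f i = j) (hk : f k = l) {a c : ℕ}
    (h : (Equiv.swap j l ∘ f ∘ Equiv.swap j l) a = c) :
    (a = i ∧ c = l) ∨ (a = l ∧ c = i) ∨ (a = j ∧ c = k) ∨ (a = k ∧ c = j) ∨
      f a = c := by
  obtain ⟨-, -, -, -, -, -, -, gi, gl, gj, gk, gother⟩ := moveAt_conj_swap hf hij hjk hkl hi hk
  by_cases ha : a ∈ ({i, j, k, l} : Set ℕ)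
  · simp only [Set.mem_insert_iff, Set.mem_singleton_iff] at ha
    rcases ha with rfl | rfl | rfl | rfl
    · exact .inl ⟨rfl, h.symm.trans gi⟩
    · exact .inr <| .inr <| .inl ⟨rfl, h.symm.trans gj⟩
    · exact .inr <| .inr <| .inr <| .inl ⟨rfl, h.symm.trans gk⟩
    · exact .inr <| .inl ⟨rfl, h.symm.trans gl⟩
  · exact .inr <| .inr <| .inr <| .inr (gother a ha ▸ h)

theorem NonCrossing.conj_swap (hfc : NonCrossing f) (hf : Function.Involutive f)
    (hij : i < j) (hjk : j < k) (hkl : k < l) (hi : f i = j) (hk : f k = l)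
    (hblock : ∀ x, i ≤ x → x ≤ l → i ≤ f x ∧ f x ≤ l) :
    NonCrossing (Equiv.swap j l ∘ f ∘ Equiv.swap j l) := by
  rintro ⟨a, b, c, d, hab, hbc, hcd, hac, hbd⟩
  have hj : f j = i := hi ▸ hf i
  have hl : f l = k := hk ▸ hf k
  have hca : f a = c → f c = a := fun h => h ▸ hf a
  have hdb : f b = d → f d = b := fun h => h ▸ hf b
  have hai : a = i → f a = j := fun h => h ▸ hi
  have hdl : d = l → f d = k := fun h => h ▸ hl
  have hb := hblock b
  have hc := hblock c
  have not_cross_f : ¬(f a = c ∧ f b = d) := fun h => hfc ⟨a, b, c, d, hab, hbc, hcd, h⟩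
  have not_cross_kl : ¬(b < k ∧ k < d ∧ d < l ∧ f b = d) :=
    fun h => hfc ⟨b, k, d, l, h.1, h.2.1, h.2.2.1, h.2.2.2, hk⟩
  have not_cross_ij : ¬(i < a ∧ a < j ∧ j < c ∧ f a = c) :=
    fun h => hfc ⟨i, a, j, c, h.1, h.2.1, h.2.2.1, hi, h.2.2.2⟩
  rcases eq_or_eq_of_conj_swap_apply_eq hf hij hjk hkl hi hk hac with
    ⟨rfl, rfl⟩ | ⟨rfl, rfl⟩ | ⟨rfl, rfl⟩ | ⟨rfl, rfl⟩ | hfa <;>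
  rcases eq_or_eq_of_conj_swap_apply_eq hf hij hjk hkl hi hk hbd with
    ⟨rfl, rfl⟩ | ⟨rfl, rfl⟩ | ⟨rfl, rfl⟩ | ⟨rfl, rfl⟩ | hfb <;>
  omega

end Reconnect

def rainbow (n : ℕ) : ℕ → ℕ := fun m => if 1 ≤ m ∧ m ≤ 2 * n then 2 * n + 1 - m else m

theorem rainbow_of_mem {n m : ℕ} (h1 : 1 ≤ m) (h2 : m ≤ 2 * n) :
    rainbow n m = 2 * n + 1 - m :=
  if_pos ⟨h1, h2⟩

theorem isMatching_rainbow (n : ℕ) : IsMatching n (rainbow n) := by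
  refine ⟨fun m h1 h2 => ?_, fun m hm => if_neg (by omega)⟩
  rw [rainbow_of_mem h1 h2, rainbow_of_mem (by omega) (by omega)]
  omega

theorem nonCrossing_rainbow (n : ℕ) : NonCrossing (rainbow n) := by
  rintro ⟨a, b, c, d, hab, hbc, hcd, hac, hbd⟩
  simp only [rainbow] at hac hbd
  split_ifs at hac hbd <;> omega

namespace IsMatching

variable {n : ℕ} {f : ℕ → ℕ} {s : ℕ}

theorem mapsTo_of_eqOn_rainbow (hf : IsMatching n f) (hpre : Set.EqOn f (rainbow n) (Set.Ico 1 s))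
    {x : ℕ} (h1 : s ≤ x) (h2 : x ≤ 2 * n + 1 - s) :
    s ≤ f x ∧ f x ≤ 2 * n + 1 - s := by
  by_cases hx : f x = x
  · omega
  have hfx := hf.apply_ne_iff.mp fun h => hx (by rwa [hf.involutive x, eq_comm] at h)
  have hffx := hf.involutive x
  constructor <;> by_contra h
  · rw [hpre ⟨hfx.1, by omega⟩, rainbow_of_mem hfx.1 hfx.2] at hffx
    omega
  · have ht := hpre (x := 2 * n + 1 - f x) ⟨by omega, by omega⟩
    rw [rainbow_of_mem (by omega) (by omega), show 2 * n + 1 - (2 * n + 1 - f x) = f x by omega]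
      at ht
    have := hf.involutive.injective ht
    omega

theorem lt_apply_of_eqOn_rainbow (hf : IsMatching n f) (hfc : NonCrossing f)
    (hpre : Set.EqOn f (rainbow n) (Set.Ico 1 s))
    (hs : f s ≠ rainbow n s) :
    1 ≤ s ∧ s < f s ∧ f s < f (2 * n + 1 - s) ∧ f (2 * n + 1 - s) < 2 * n + 1 - s := by
  obtain ⟨hs1, hs2⟩ : 1 ≤ s ∧ s ≤ 2 * n := by
    by_contra h
    exact hs (by rw [hf.2 s (by omega), (isMatching_rainbow n).2 s (by omega)])
  have hinv := hf.involutive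
  obtain ⟨l, hl⟩ : ∃ l, 2 * n + 1 - s = l := ⟨_, rfl⟩
  have hs_ne_l : f s ≠ l := by rwa [rainbow_of_mem hs1 hs2, hl] at hs
  have hsl : s < l := by
    by_contra h
    have hu := hpre (x := l) ⟨by omega, by omega⟩
    rw [rainbow_of_mem (by omega) (by omega), ← hl, show 2 * n + 1 - (2 * n + 1 - s) = s by omega]
      at hu
    exact hs_ne_l (by rw [← hu, hl, hinv])
  have hblock : ∀ x, s ≤ x → x ≤ l → s ≤ f x ∧ f x ≤ l := fun x h1 h2 =>
    hl ▸ hf.mapsTo_of_eqOn_rainbow hpre h1 (hl ▸ h2)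
  have hsj : s < f s := by
    have := hblock s le_rfl hsl.le
    have := (hf.1 s hs1 hs2).2.2.2
    omega
  have hjl : f s < l := by have := hblock s le_rfl hsl.le; omega
  have hsk : s < f l := by
    have := hblock l hsl.le le_rfl
    have : f l ≠ s := fun h => hs_ne_l (by rw [← h, hinv])
    omega
  have hkl : f l < l := by
    have := hblock l hsl.le le_rfl
    have := (hf.1 l (by omega) (by omega)).2.2.2
    omega
  subst hl
  refine ⟨hs1, hsj, ?_, hkl⟩
  rcases lt_trichotomy (f s) (f (2 * n + 1 - s)) with h | h | h
  · exact h
  · exact absurd (hinv.injective h) (by omega)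
  · exact absurd ⟨s, _, f s, _, hsk, h, hjl, rfl, hinv _⟩ hfc

theorem exists_moveAt_of_eqOn_rainbow (hf : IsMatching n f) (hfc : NonCrossing f)
    (hpre : Set.EqOn f (rainbow n) (Set.Ico 1 s))
    (hs : f s ≠ rainbow n s) :
    ∃ g i j k l, IsMatching n g ∧ NonCrossing g ∧ MoveAt f g i j k l ∧
      Set.EqOn g (rainbow n) (Set.Ico 1 (s + 1)) := by
  obtain ⟨hs1, hsj, hjk, hkl⟩ := hf.lt_apply_of_eqOn_rainbow hfc hpre hs
  have hinv := hf.involutive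
  have hmove := moveAt_conj_swap hinv hsj hjk hkl rfl (hinv _)
  refine ⟨_, _, _, _, _, hf.conj_swap (by rw [hinv]; exact hsj.ne) hkl.ne,
    hfc.conj_swap hinv hsj hjk hkl rfl (hinv _) fun x => hf.mapsTo_of_eqOn_rainbow hpre, hmove,
    fun t ⟨ht1, ht2⟩ => ?_⟩
  obtain ⟨-, -, -, -, -, -, -, gs, -, -, -, gother⟩ := hmove
  rcases Nat.lt_succ_iff_lt_or_eq.mp ht2 with ht | rfl
  · rw [gother t (by simp only [Set.mem_insert_iff, Set.mem_singleton_iff]; omega),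
      hpre ⟨ht1, ht⟩]
  · rw [gs, rainbow_of_mem ht1 (by omega)]

end IsMatching

namespace DIdx

variable {n : ℕ}

def allDotted {f : ℕ → ℕ} (hf : IsMatching n f) (hfc : NonCrossing f) : DIdx n :=
  ⟨(f, allDots n), hf, hfc, hf.allDots_apply, fun m hm => by
    simp only [allDots, decide_eq_false_iff_not]; omega⟩

theorem eq_allDotted {p : DIdx n} (hp : p.1.2 = allDots n) :
    p = allDotted p.2.1 p.2.2.1 :=
  Subtype.ext (Prod.ext rfl hp)

theorem mk_single_eq_of_moveAt {p q : DIdx n} (hp : p.1.2 = allDots n) (hq : q.1.2 = allDots n)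
    {i j k l : ℕ} (hmove : MoveAt p.1.1 q.1.1 i j k l) :
    Submodule.Quotient.mk (p := NSub n) (Finsupp.single p (1 : ℤ)) =
      Submodule.Quotient.mk (p := NSub n) (Finsupp.single q (1 : ℤ)) := by
  have ⟨hij, _, hkl, hi, _, hk, _⟩ := hmove
  have hf := p.2.1
  have dotted : ∀ x, p.1.1 x ≠ x → p.1.2 x = true := fun x hx => by
    rw [hp]; simpa only [allDots, decide_eq_true_eq] using hf.apply_ne_iff.mp hx
  rw [Submodule.Quotient.eq]
  refine Submodule.subset_span ⟨p, q, i, j, k, l, hmove, hp.trans hq.symm, dotted i (by omega),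
    dotted j ?_, dotted k (by omega), dotted l ?_, rfl⟩
  · rw [← hi, hf.involutive]; omega
  · rw [← hk, hf.involutive]; omega

theorem mk_single_eq_rainbow_of_eqOn {s : ℕ} (hs : s ≤ 2 * n + 1) :
    ∀ p : DIdx n, p.1.2 = allDots n → Set.EqOn p.1.1 (rainbow n) (Set.Ico 1 s) →
      Submodule.Quotient.mk (p := NSub n) (Finsupp.single p (1 : ℤ)) =
        Submodule.Quotient.mk (p := NSub n) (Finsupp.single
          (allDotted (isMatching_rainbow n) (nonCrossing_rainbow n)) (1 : ℤ)) := by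
  induction hs using Nat.decreasingInduction with
  | self =>
    intro p hp hpre
    have hf : p.1.1 = rainbow n := funext fun x => by
      by_cases hx : 1 ≤ x ∧ x ≤ 2 * n
      · exact hpre ⟨hx.1, by omega⟩
      · rw [p.2.1.2 x (by omega), (isMatching_rainbow n).2 x (by omega)]
    rw [eq_allDotted hp]
    simp only [allDotted, hf]
  | of_succ s _ ih =>
    intro p hp hpre
    by_cases hps : p.1.1 s = rainbow n s
    · refine ih p hp fun t ⟨ht1, ht2⟩ => ?_
      rcases Nat.lt_succ_iff_lt_or_eq.mp ht2 with ht | rfl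
      exacts [hpre ⟨ht1, ht⟩, hps]
    · obtain ⟨g, i, j, k, l, hg, hgc, hmove, hgpre⟩ :=
        p.2.1.exists_moveAt_of_eqOn_rainbow p.2.2.1 hpre hps
      rw [mk_single_eq_of_moveAt (q := allDotted hg hgc) hp rfl hmove]
      exact ih _ rfl hgpre

theorem mk_single_eq_rainbow {p : DIdx n} (hp : p.1.2 = allDots n) :
    Submodule.Quotient.mk (p := NSub n) (Finsupp.single p (1 : ℤ)) =
      Submodule.Quotient.mk (p := NSub n)
        (Finsupp.single (allDotted (isMatching_rainbow n) (nonCrossing_rainbow n)) (1 : ℤ)) :=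
  mk_single_eq_rainbow_of_eqOn (s := 1) (by omega) p hp (by simp)

end DIdx

/-- Modulo Type II relations, all all-dotted configurations are equal: for any two
non-crossing matchings `a`, `b`, the all-dotted basis elements agree in `M/N`. -/
theorem stmt17 (n : ℕ) (p q : DIdx n)
    (hp : p.1.2 = allDots n) (hq : q.1.2 = allDots n) :
    Submodule.Quotient.mk (p := NSub n) (Finsupp.single p (1 : ℤ)) =
      Submodule.Quotient.mk (p := NSub n) (Finsupp.single q (1 : ℤ)) :=
  (DIdx.mk_single_eq_rainbow hp).trans (DIdx.mk_single_eq_rainbow hq).symm
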